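/- Let p be a prime, N ∈ ℕ, and let x_1, …, x_N ∈ ℤ_p with p-adic discrepancy D_N. Let (y_n)_{n=1}^{N²} be the N² differences x_i − x_j, i, j = 1, …, N, in any ordering, and let E_{N²} denote the p-adic discrepancy of (y_1, …, y_{N²}). Then D_N² ≤ E_{N²} ≤ D_N. -/

import Mathlib

open MeasureTheory Filter
open scoped Classical

/-- The closed ball `D_p(z,s) = {x ∈ ℤ_p : |x - z|_p ≤ s}`. -/
def padicBall (p : ℕ) [Fact p.Prime] (z : ℤ_[p]) (s : ℝ) : Set ℤ_[p] :=
  {x : ℤ_[p] | ‖x - z‖ ≤ s}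

/-- The p-adic discrepancy of the first `N` terms of a sequence `x : ℕ → ℤ_[p]`
(indexed starting at 1):
`D_N(x) = sup_{z ∈ ℤ_p, k ∈ ℕ} | #{1 ≤ n ≤ N : x_n ∈ D_p(z, p^{-k})}/N - p^{-k} |`. -/
noncomputable def padicDiscrepancy (p : ℕ) [Fact p.Prime] (x : ℕ → ℤ_[p]) (N : ℕ) : ℝ :=
  ⨆ z : ℤ_[p], ⨆ k : ℕ,
    |(((Finset.Icc 1 N).filter fun n =>
        x n ∈ padicBall p z ((p : ℝ) ^ (-(k : ℤ)))).card : ℝ) / N - (p : ℝ) ^ (-(k : ℤ))|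

/-- `#{1 ≤ i ≠ j ≤ N : |x_i - x_j|_p ≤ t}`. -/
noncomputable def pairCount (p : ℕ) [Fact p.Prime] (x : ℕ → ℤ_[p]) (N : ℕ) (t : ℝ) : ℕ :=
  ((Finset.Icc 1 N ×ˢ Finset.Icc 1 N).filter
    fun ij => ij.1 ≠ ij.2 ∧ ‖x ij.1 - x ij.2‖ ≤ t).card

/-- The pair correlation function
`F_{N,α,p}(s) = (1/N²)·(1/μ(D_p(0, s/N^α)))·#{1 ≤ i ≠ j ≤ N : |x_i - x_j|_p ≤ s/N^α}`. -/
noncomputable def pairF (p : ℕ) [Fact p.Prime] [MeasurableSpace ℤ_[p]]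
    (μ : Measure ℤ_[p]) (x : ℕ → ℤ_[p]) (α : ℝ) (N : ℕ) (s : ℝ) : ℝ :=
  (1 / (N : ℝ) ^ 2) * (1 / (μ (padicBall p 0 (s / (N : ℝ) ^ α))).toReal) *
    (pairCount p x N (s / (N : ℝ) ^ α) : ℝ)

/-- `x` has weak Poissonian pair correlations for `α` (w.r.t. the normalized Haar
measure `μ`) if `F_{N,α,p}(s) → 1` for all `s > 0`. -/
def HasWeakPPC (p : ℕ) [Fact p.Prime] [MeasurableSpace ℤ_[p]] (μ : Measure ℤ_[p])
    (x : ℕ → ℤ_[p]) (α : ℝ) : Prop :=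
  ∀ s : ℝ, 0 < s → Tendsto (fun N : ℕ => pairF p μ x α N s) atTop (nhds 1)

/- ### Auxiliary lemmas -/

/-- The single term of the discrepancy supremum. -/
noncomputable def dterm (p : ℕ) [Fact p.Prime] (x : ℕ → ℤ_[p]) (N : ℕ) (z : ℤ_[p]) (k : ℕ) : ℝ :=
  |(((Finset.Icc 1 N).filter fun n =>
      x n ∈ padicBall p z ((p : ℝ) ^ (-(k : ℤ)))).card : ℝ) / N - (p : ℝ) ^ (-(k : ℤ))|

section Aux

variable {p : ℕ} [Fact p.Prime]

lemma discrepancy_eq (x : ℕ → ℤ_[p]) (N : ℕ) :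
    padicDiscrepancy p x N = ⨆ z : ℤ_[p], ⨆ k : ℕ, dterm p x N z k := rfl

lemma dterm_le_one (x : ℕ → ℤ_[p]) {N : ℕ} (hN : 1 ≤ N) (z : ℤ_[p]) (k : ℕ) :
    dterm p x N z k ≤ 1 := by
  have hp : (1:ℝ) ≤ p := by exact_mod_cast (Fact.out : p.Prime).one_le
  have ht0 : (0:ℝ) ≤ (p : ℝ) ^ (-(k : ℤ)) := by positivity
  have ht1 : (p : ℝ) ^ (-(k : ℤ)) ≤ 1 := zpow_le_one_of_nonpos₀ hp (by simp)
  have hc : (((Finset.Icc 1 N).filter fun n =>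
      x n ∈ padicBall p z ((p : ℝ) ^ (-(k : ℤ)))).card : ℝ) / N ≤ 1 := by
    rw [div_le_one (by exact_mod_cast hN)]
    exact_mod_cast (Finset.card_filter_le _ _).trans (by simp)
  have hc0 : (0:ℝ) ≤ (((Finset.Icc 1 N).filter fun n =>
      x n ∈ padicBall p z ((p : ℝ) ^ (-(k : ℤ)))).card : ℝ) / N := by positivity
  rw [dterm, abs_sub_le_iff]
  constructor <;> linarith

lemma dterm_le_discrepancy (x : ℕ → ℤ_[p]) {N : ℕ} (hN : 1 ≤ N) (z : ℤ_[p]) (k : ℕ) :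
    dterm p x N z k ≤ padicDiscrepancy p x N := by
  rw [discrepancy_eq]
  refine le_ciSup_of_le ⟨1, ?_⟩ z (le_ciSup ⟨1, ?_⟩ k) <;>
    rintro r ⟨i, rfl⟩
  · exact ciSup_le fun j => dterm_le_one x hN i j
  · exact dterm_le_one x hN z i

lemma discrepancy_le (x : ℕ → ℤ_[p]) {N : ℕ} {c : ℝ}
    (h : ∀ z k, dterm p x N z k ≤ c) : padicDiscrepancy p x N ≤ c := by
  rw [discrepancy_eq]
  exact ciSup_le fun z => ciSup_le fun k => h z k

lemma discrepancy_nonneg (x : ℕ → ℤ_[p]) {N : ℕ} (hN : 1 ≤ N) :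
    0 ≤ padicDiscrepancy p x N :=
  (abs_nonneg _).trans (dterm_le_discrepancy x hN 0 0)

lemma key_norm_iff (k : ℕ) (a b : ℤ_[p]) :
    ‖a - b‖ ≤ (p : ℝ) ^ (-(k : ℤ)) ↔ PadicInt.toZModPow k a = PadicInt.toZModPow k b := by
  rw [PadicInt.norm_le_pow_iff_mem_span_pow, ← PadicInt.ker_toZModPow, RingHom.mem_ker,
    map_sub, sub_eq_zero]

lemma count_transfer {N : ℕ} {x y : ℕ → ℤ_[p]}
    (hy : (Finset.Icc 1 (N ^ 2)).val.map y =
      ((Finset.Icc 1 N ×ˢ Finset.Icc 1 N).val.map fun ij => x ij.1 - x ij.2))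
    (P : ℤ_[p] → Prop) :
    ((Finset.Icc 1 (N ^ 2)).filter fun n => P (y n)).card =
      ((Finset.Icc 1 N ×ˢ Finset.Icc 1 N).filter fun ij => P (x ij.1 - x ij.2)).card := by
  have h1 := Multiset.countP_map y (Finset.Icc 1 (N ^ 2)).val P
  have h2 := Multiset.countP_map (fun ij : ℕ × ℕ => x ij.1 - x ij.2)
      (Finset.Icc 1 N ×ˢ Finset.Icc 1 N).val P
  rw [hy, h2] at h1
  convert h1.symm using 2
  all_goals rfl

lemma count_split (x : ℕ → ℤ_[p]) (N : ℕ) (z : ℤ_[p]) (t : ℝ) :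
    ((Finset.Icc 1 N ×ˢ Finset.Icc 1 N).filter fun ij =>
        x ij.1 - x ij.2 ∈ padicBall p z t).card
      = ∑ j ∈ Finset.Icc 1 N, ((Finset.Icc 1 N).filter fun i =>
          x i ∈ padicBall p (z + x j) t).card := by
  rw [Finset.card_filter, Finset.sum_product, Finset.sum_comm]
  refine Finset.sum_congr rfl fun j _ => ?_
  rw [Finset.card_filter]
  refine Finset.sum_congr rfl fun i _ => if_congr ?_ rfl rfl
  simp only [padicBall, Set.mem_setOf_eq]
  rw [show x i - x j - z = x i - (z + x j) by ring]

lemma count_diag (x : ℕ → ℤ_[p]) (N k : ℕ) [NeZero (p ^ k)] :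
    ((Finset.Icc 1 N ×ˢ Finset.Icc 1 N).filter fun ij =>
        x ij.1 - x ij.2 ∈ padicBall p 0 ((p:ℝ)^(-(k:ℤ)))).card
      = ∑ c : ZMod (p ^ k), ((Finset.Icc 1 N).filter fun n =>
          PadicInt.toZModPow k (x n) = c).card ^ 2 := by
  have key : ∀ i j : ℕ, (x i - x j ∈ padicBall p 0 ((p:ℝ)^(-(k:ℤ)))) ↔
      PadicInt.toZModPow k (x j) = PadicInt.toZModPow k (x i) := by
    intro i j
    rw [padicBall, Set.mem_setOf_eq, sub_zero, key_norm_iff, eq_comm]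
  rw [Finset.card_filter, Finset.sum_product]
  have h1 : ∀ i, (∑ j ∈ Finset.Icc 1 N,
      if x i - x j ∈ padicBall p 0 ((p:ℝ)^(-(k:ℤ))) then 1 else 0)
      = ((Finset.Icc 1 N).filter fun n =>
          PadicInt.toZModPow k (x n) = PadicInt.toZModPow k (x i)).card := by
    intro i
    rw [Finset.card_filter]
    exact Finset.sum_congr rfl fun j _ => if_congr (key i j) rfl rfl
  simp only [h1]
  rw [← Finset.sum_fiberwise_of_maps_to
      (g := fun i => PadicInt.toZModPow k (x i)) (fun i _ => Finset.mem_univ _)]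
  refine Finset.sum_congr rfl fun c _ => ?_
  have h2 : ∀ i ∈ (Finset.Icc 1 N).filter (fun i => PadicInt.toZModPow k (x i) = c),
      ((Finset.Icc 1 N).filter fun n =>
        PadicInt.toZModPow k (x n) = PadicInt.toZModPow k (x i)).card
      = ((Finset.Icc 1 N).filter fun n => PadicInt.toZModPow k (x n) = c).card := by
    intro i hi
    rw [(Finset.mem_filter.mp hi).2]
  rw [Finset.sum_congr rfl h2, Finset.sum_const, smul_eq_mul, sq]

lemma sum_fibers (x : ℕ → ℤ_[p]) (N k : ℕ) [NeZero (p ^ k)] :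
    ∑ c : ZMod (p ^ k), ((Finset.Icc 1 N).filter fun n =>
      PadicInt.toZModPow k (x n) = c).card = N := by
  rw [← Finset.card_eq_sum_card_fiberwise
    (fun n _ => Finset.mem_univ (PadicInt.toZModPow k (x n)))]
  simp

end Aux

/-- Theorem (Beer): if `(y_1, …, y_{N²})` is any ordering of the `N²` differences
`x_i - x_j`, `1 ≤ i, j ≤ N`, and `E_{N²}` is its p-adic discrepancy, then
`D_N² ≤ E_{N²} ≤ D_N`. -/
theorem discrepancy_difference_sequence
    (p : ℕ) [Fact p.Prime] (N : ℕ) (hN : 1 ≤ N) (x y : ℕ → ℤ_[p])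
    (hy : (Finset.Icc 1 (N ^ 2)).val.map y =
      ((Finset.Icc 1 N ×ˢ Finset.Icc 1 N).val.map fun ij => x ij.1 - x ij.2)) :
    padicDiscrepancy p x N ^ 2 ≤ padicDiscrepancy p y (N ^ 2) ∧
      padicDiscrepancy p y (N ^ 2) ≤ padicDiscrepancy p x N := by
  have hN2 : 1 ≤ N ^ 2 := Nat.one_le_pow _ _ hN
  have hN0 : (0:ℝ) < N := by exact_mod_cast hN
  have hE0 : 0 ≤ padicDiscrepancy p y (N ^ 2) := discrepancy_nonneg y hN2
  constructor
  · -- lower bound : D_N ^ 2 ≤ E_{N²}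
    have hD : padicDiscrepancy p x N ≤ Real.sqrt (padicDiscrepancy p y (N ^ 2)) := by
      refine discrepancy_le x fun z k => ?_
      refine Real.le_sqrt_of_sq_le ?_
      haveI : NeZero (p ^ k) := ⟨pow_ne_zero k (Fact.out : p.Prime).ne_zero⟩
      set t : ℝ := (p:ℝ) ^ (-(k:ℤ)) with ht
      set f : ℤ_[p] → ZMod (p ^ k) := fun a => PadicInt.toZModPow k a with hf
      set n : ZMod (p ^ k) → ℕ :=
        fun c => ((Finset.Icc 1 N).filter fun m => f (x m) = c).card with hn
      have hq : ((p ^ k : ℕ) : ℝ) * t = 1 := by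
        rw [ht, zpow_neg, zpow_natCast]
        push_cast
        field_simp
        exact div_self (pow_ne_zero _ (by exact_mod_cast (Fact.out : p.Prime).ne_zero))
      -- the x-count is a fiber count
      have hA : ((Finset.Icc 1 N).filter fun m =>
          x m ∈ padicBall p z t) = (Finset.Icc 1 N).filter fun m => f (x m) = f z := by
        refine Finset.filter_congr fun m _ => ?_
        rw [padicBall, Set.mem_setOf_eq, ht, key_norm_iff, hf]
      -- the y-count at (0, k) is the sum of squared fiber counts
      have hC : ((Finset.Icc 1 (N ^ 2)).filter fun m =>
          y m ∈ padicBall p 0 t).card = ∑ c : ZMod (p ^ k), n c ^ 2 := by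
        rw [count_transfer hy (fun v => v ∈ padicBall p 0 t), ht, count_diag]
      have hsum : ∑ c : ZMod (p ^ k), (n c : ℝ) = N := by
        exact_mod_cast congrArg (Nat.cast : ℕ → ℝ) (sum_fibers x N k)
      have hu1 : ∑ c : ZMod (p ^ k), (n c : ℝ) / N = 1 := by
        rw [← Finset.sum_div, hsum, div_self hN0.ne']
      have hcard : ((Finset.univ : Finset (ZMod (p ^ k))).card : ℝ) = ((p ^ k : ℕ) : ℝ) := by
        simp [ZMod.card]
      have hexpand : ∑ c : ZMod (p ^ k), ((n c : ℝ) / N - t) ^ 2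
          = (∑ c : ZMod (p ^ k), ((n c : ℝ) / N) ^ 2) - t := by
        have e : ∀ c : ZMod (p ^ k), ((n c : ℝ) / N - t) ^ 2
            = ((n c : ℝ) / N) ^ 2 - 2 * t * ((n c : ℝ) / N) + t ^ 2 := fun c => by ring
        rw [Finset.sum_congr rfl fun c _ => e c, Finset.sum_add_distrib,
          Finset.sum_sub_distrib, ← Finset.mul_sum, hu1, Finset.sum_const, nsmul_eq_mul,
          hcard]
        have : ((p ^ k : ℕ) : ℝ) * t ^ 2 = t := by rw [sq, ← mul_assoc, hq, one_mul]
        rw [this]; ring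
      have hsingle : ((n (f z) : ℝ) / N - t) ^ 2
          ≤ ∑ c : ZMod (p ^ k), ((n c : ℝ) / N - t) ^ 2 :=
        Finset.single_le_sum (f := fun c : ZMod (p ^ k) => ((n c : ℝ) / N - t) ^ 2)
          (fun c _ => sq_nonneg _) (Finset.mem_univ _)
      have hCsq : (((Finset.Icc 1 (N ^ 2)).filter fun m =>
          y m ∈ padicBall p 0 t).card : ℝ) / (N ^ 2 : ℕ)
          = ∑ c : ZMod (p ^ k), ((n c : ℝ) / N) ^ 2 := by
        rw [hC]
        push_cast
        rw [Finset.sum_div]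
        exact Finset.sum_congr rfl fun c _ => by rw [div_pow]
      have hterm : dterm p x N z k ^ 2 = ((n (f z) : ℝ) / N - t) ^ 2 := by
        rw [dterm, sq_abs, ← ht, hA, hn]
      calc dterm p x N z k ^ 2 = ((n (f z) : ℝ) / N - t) ^ 2 := hterm
        _ ≤ ∑ c : ZMod (p ^ k), ((n c : ℝ) / N - t) ^ 2 := hsingle
        _ = (∑ c : ZMod (p ^ k), ((n c : ℝ) / N) ^ 2) - t := hexpand
        _ = (((Finset.Icc 1 (N ^ 2)).filter fun m =>
              y m ∈ padicBall p 0 t).card : ℝ) / (N ^ 2 : ℕ) - t := by rw [hCsq]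
        _ ≤ dterm p y (N ^ 2) 0 k := le_abs_self _
        _ ≤ padicDiscrepancy p y (N ^ 2) := dterm_le_discrepancy y hN2 0 k
    calc padicDiscrepancy p x N ^ 2
        ≤ Real.sqrt (padicDiscrepancy p y (N ^ 2)) ^ 2 :=
          pow_le_pow_left₀ (discrepancy_nonneg x hN) hD 2
      _ = padicDiscrepancy p y (N ^ 2) := Real.sq_sqrt hE0
  · -- upper bound : E_{N²} ≤ D_N
    refine discrepancy_le y fun z k => ?_
    set t : ℝ := (p:ℝ) ^ (-(k:ℤ)) with ht
    set A : ℕ → ℕ := fun j => ((Finset.Icc 1 N).filter fun i =>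
        x i ∈ padicBall p (z + x j) t).card with hAdef
    have hcount : ((Finset.Icc 1 (N ^ 2)).filter fun m =>
        y m ∈ padicBall p z t).card = ∑ j ∈ Finset.Icc 1 N, A j := by
      rw [count_transfer hy (fun v => v ∈ padicBall p z t), count_split]
    have hval : (((Finset.Icc 1 (N ^ 2)).filter fun m =>
        y m ∈ padicBall p z t).card : ℝ) / (N ^ 2 : ℕ) - t
        = (1 / (N : ℝ)) * ∑ j ∈ Finset.Icc 1 N, ((A j : ℝ) / N - t) := by
      rw [hcount, Finset.sum_sub_distrib, ← Finset.sum_div, Finset.sum_const,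
        Nat.card_Icc, nsmul_eq_mul]
      push_cast
      field_simp
    have hbound : ∀ j, |(A j : ℝ) / N - t| ≤ padicDiscrepancy p x N := fun j =>
      dterm_le_discrepancy x hN (z + x j) k
    calc dterm p y (N ^ 2) z k
        = |(1 / (N : ℝ)) * ∑ j ∈ Finset.Icc 1 N, ((A j : ℝ) / N - t)| := by
          rw [dterm, ← ht, hval]
      _ ≤ (1 / (N : ℝ)) * ∑ j ∈ Finset.Icc 1 N, |(A j : ℝ) / N - t| := by
          rw [abs_mul, abs_of_nonneg (by positivity : (0:ℝ) ≤ 1 / (N:ℝ))]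
          exact mul_le_mul_of_nonneg_left (Finset.abs_sum_le_sum_abs _ _) (by positivity)
      _ ≤ (1 / (N : ℝ)) * (N * padicDiscrepancy p x N) := by
          refine mul_le_mul_of_nonneg_left ?_ (by positivity)
          calc ∑ j ∈ Finset.Icc 1 N, |(A j : ℝ) / N - t|
              ≤ ∑ j ∈ Finset.Icc 1 N, padicDiscrepancy p x N :=
                Finset.sum_le_sum fun j _ => hbound j
            _ = N * padicDiscrepancy p x N := by
                rw [Finset.sum_const, Nat.card_Icc, nsmul_eq_mul]; push_cast; ring
      _ = padicDiscrepancy p x N := by field_simp
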